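/- No certificate set in covtree is a countably infinite disjoint union of certificate sets: if cert(Γₘ) = ⨆_{i∈ℕ} cert(Γⁱ_{nᵢ}) with the union disjoint, then the union is in fact finite. Equivalently, for any node Γₘ and any countable family of pairwise incomparable nodes above Γₘ whose certificate sets do not exhaust cert(Γₘ) finitely, there exists an infinite path through Γₘ avoiding all of them. -/

import Mathlib

/-- A finite labeled order: a partial order structure on `Fin n`. -/
abbrev FinOrd (n : ℕ) := PartialOrder (Fin n)

/-- Isomorphism of two orders on `Fin n`. -/
def OrdIso {n : ℕ} (p q : FinOrd n) : Prop :=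
  Nonempty (p.le ≃r q.le)

instance ordSetoid (n : ℕ) : Setoid (FinOrd n) where
  r := OrdIso
  iseqv := by
    refine ⟨fun p => ⟨RelIso.refl _⟩, ?_, ?_⟩
    · rintro p q ⟨e⟩; exact ⟨e.symm⟩
    · rintro p q r ⟨e⟩ ⟨f⟩; exact ⟨e.trans f⟩

/-- An `n`-order: an isomorphism class of partial orders of cardinality `n`. -/
def NOrder (n : ℕ) := Quotient (ordSetoid n)

/-- `B` (a partial order on `Fin n`) occurs as a stem (finite downward-closed
subcauset) in the partial order `p` on `α`. -/
def StemIn {n : ℕ} {α : Type*} (B : FinOrd n) (p : PartialOrder α) : Prop :=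
  ∃ f : Fin n → α, Function.Injective f ∧
    (∀ i j : Fin n, B.le i j ↔ p.le (f i) (f j)) ∧
    (∀ (i : Fin n) (y : α), p.lt y (f i) → ∃ j : Fin n, f j = y)

/-- The `n`-order `B` is a stem in the order `p`. -/
def QStemIn {n : ℕ} {α : Type*} (B : NOrder n) (p : PartialOrder α) : Prop :=
  ∃ b : FinOrd n, ⟦b⟧ = B ∧ StemIn b p

/-- The set of `k`-stems of `p`, as a set of `k`-orders. -/
def stems (k : ℕ) {α : Type*} (p : PartialOrder α) : Set (NOrder k) :=
  {B | QStemIn B p}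

/-- Stem relation between unlabeled finite orders: `S` is a stem in `T`. -/
def NStemIn {n m : ℕ} (S : NOrder n) (T : NOrder m) : Prop :=
  ∃ t : FinOrd m, ⟦t⟧ = T ∧ QStemIn S t

/-- An order is past-finite if every element has finitely many elements below it. -/
def PastFinite {α : Type*} (p : PartialOrder α) : Prop :=
  ∀ x : α, {y : α | p.lt y x}.Finite

/-- The operation sending a set of `n`-orders to the set of `(n-1)`-stems of its
elements. -/
def Ominus (n : ℕ) (Γ : Set (NOrder n)) : Set (NOrder (n - 1)) :=
  {B | ∃ A ∈ Γ, NStemIn B A}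

/-- The `j`-fold iterate of `Ominus`. -/
def OminusIter : (j : ℕ) → (n : ℕ) → Set (NOrder n) → Set (NOrder (n - j))
  | 0, _, Γ => Γ
  | j + 1, n, Γ => Ominus (n - j) (OminusIter j n Γ)

/-- `Γ` is a node of covtree at level `n`: it is nonempty and has a certificate,
i.e. a (finite or countably infinite) past-finite order whose set of `n`-stems
is exactly `Γ`. -/
def IsNode (n : ℕ) (Γ : Set (NOrder n)) : Prop :=
  Γ.Nonempty ∧ ∃ (α : Type) (p : PartialOrder α), Countable α ∧ PastFinite p ∧
    stems n p = Γ


/-- An infinite path in covtree, starting at the root: for each `n` a node of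
covtree at level `n` (a nonempty set of `n`-orders admitting a certificate),
each node being directly below the next via the `O₋` operation.  (Level `0`
carries the trivial node consisting of the empty order.) -/
structure CovPath where
  node : (n : ℕ) → Set (NOrder n)
  nonempty : ∀ n, (node n).Nonempty
  isNode : ∀ n, IsNode n (node n)
  link : ∀ n, Ominus (n + 1) (node (n + 1)) = node n

/-- A naturally labeled infinite causet: a partial order on `ℕ` in which
`i ≺ j` implies `i < j` (hence past-finite). -/
def NatCauset := {p : PartialOrder ℕ // ∀ i j : ℕ, p.lt i j → i < j}

instance natSetoid : Setoid NatCauset where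
  r p q := Nonempty (p.val.le ≃r q.val.le)
  iseqv := by
    refine ⟨fun p => ⟨RelIso.refl _⟩, ?_, ?_⟩
    · rintro p q ⟨e⟩; exact ⟨e.symm⟩
    · rintro p q r ⟨e⟩ ⟨f⟩; exact ⟨e.trans f⟩

/-- The space `Ω` of infinite orders: isomorphism classes of countable
past-finite infinite causets. -/
def InfOrd := Quotient natSetoid

/-- The set of `n`-stems of an infinite order. -/
def Nstems (n : ℕ) (C : InfOrd) : Set (NOrder n) :=
  {B | ∃ c : NatCauset, ⟦c⟧ = C ∧ QStemIn B c.val}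

/-- The stem set of an `n`-order `B`: the set of infinite orders containing `B`
as a stem. -/
def stemSet {n : ℕ} (B : NOrder n) : Set InfOrd :=
  {C | B ∈ Nstems n C}

/-- The certificate set of a set `Γ` of `n`-orders: the set of infinite orders
whose set of `n`-stems is exactly `Γ`. -/
def certSet {n : ℕ} (Γ : Set (NOrder n)) : Set InfOrd :=
  {C | Nstems n C = Γ}

/-- The rogue equivalence relation: two infinite orders are equivalent iff they
have the same `n`-stems for every `n`. -/
instance rogueSetoid : Setoid InfOrd where
  r A B := ∀ n, Nstems n A = Nstems n B
  iseqv := by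
    refine ⟨fun A n => rfl, ?_, ?_⟩
    · intro A B h n; exact (h n).symm
    · intro A B C h h' n; exact (h n).trans (h' n)

/-- The quotient `Ω/∼_R` of infinite orders by the rogue equivalence. -/
def RQuot := Quotient rogueSetoid

open scoped Classical in
/-- The distance between two infinite orders: `2⁻ⁿ` where `n` is the largest
integer such that the two orders have the same set of `n`-stems, and `0` if
they have the same stems of every cardinality. -/
noncomputable def preDist (A B : InfOrd) : ℝ :=
  if ∀ n, Nstems n A = Nstems n B then 0
  else (2 : ℝ)⁻¹ ^ sSup {k : ℕ | Nstems k A = Nstems k B}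

/-- The induced metric on the quotient `Ω/∼_R`. -/
noncomputable def rdist : RQuot → RQuot → ℝ :=
  Quotient.lift₂ preDist (by
    intro a b a' b' ha hb
    have h : ∀ k, (Nstems k a = Nstems k b) ↔ (Nstems k a' = Nstems k b') := by
      intro k; rw [ha k, hb k]
    unfold preDist
    by_cases hall : ∀ n, Nstems n a = Nstems n b
    · rw [if_pos hall, if_pos (fun n => (h n).mp (hall n))]
    · rw [if_neg hall, if_neg (fun hc => hall (fun n => (h n).mpr (hc n)))]
      congr 1
      apply congrArg
      ext k
      exact h k)

/-- The image of a certificate set in the quotient `Ω/∼_R`. -/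
def certR {n : ℕ} (Γ : Set (NOrder n)) : Set RQuot :=
  (fun C : InfOrd => (⟦C⟧ : RQuot)) '' certSet Γ

/-- The diameter of a subset of `Ω/∼_R`: the supremum of distances between its
points. -/
noncomputable def rdiam (S : Set RQuot) : ℝ :=
  sSup {r : ℝ | ∃ x ∈ S, ∃ y ∈ S, rdist x y = r}


/-!
Suppose infinitely many of the certificate sets are nonempty and pick an infinite order `Cᵢ`
in each. Each `n` admits only finitely many sets of `n`-stems, so along a nonprincipal
ultrafilter the stem sets of the `Cᵢ` converge to a profile `Δ`, every finite part of which is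
realised by some `Cᵢ`. Such a profile is realised by a single infinite order `d`: build `d` as
the union of a chain of naturally labelled finite orders in `Δ`, each step adjoining one more
element of `Δ` inside a certificate that agrees with `Δ` up to a high enough level. Then `d`
lies in `cert(Γₘ)`, hence in some `cert(Γᵢ₀)`; but almost all `Cᵢ` share the stems of `d` at
level `lvl i₀`, so they lie in `cert(Γᵢ₀)` as well, contradicting disjointness.
-/
open Function Filter

abbrev FinOrd.comap {α : Type*} {m : ℕ} (p : PartialOrder α) (g : Fin m → α)
    (hg : Injective g) : FinOrd m :=
  @PartialOrder.lift (Fin m) α p g hg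

section Stems

variable {α β : Type*} {m n : ℕ}

theorem lt_iff_lt_of_le_iff {p : PartialOrder α} {q : PartialOrder β} {f : α → β}
    (h : ∀ a b, p.le a b ↔ q.le (f a) (f b)) (a b : α) : p.lt a b ↔ q.lt (f a) (f b) := by
  rw [p.lt_iff_le_not_ge, q.lt_iff_le_not_ge, h, h]

theorem StemIn.trans {B : FinOrd n} {t : FinOrd m} {p : PartialOrder α}
    (hB : StemIn B t) (ht : StemIn t p) : StemIn B p := by
  obtain ⟨f, hf, hfle, hflt⟩ := hB
  obtain ⟨g, hg, hgle, hglt⟩ := ht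
  refine ⟨g ∘ f, hg.comp hf, fun i j => (hfle i j).trans (hgle _ _), fun i y hy => ?_⟩
  obtain ⟨j, rfl⟩ := hglt (f i) y hy
  obtain ⟨k, rfl⟩ := hflt i j ((lt_iff_lt_of_le_iff hgle _ _).2 hy)
  exact ⟨k, rfl⟩

theorem StemIn.of_relIso {B : FinOrd n} {p : PartialOrder α} {q : PartialOrder β}
    (e : p.le ≃r q.le) (h : StemIn B p) : StemIn B q := by
  obtain ⟨f, hf, hfle, hflt⟩ := h
  refine ⟨e ∘ f, e.injective.comp hf, fun i j => (hfle i j).trans e.map_rel_iff.symm,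
    fun i y hy => ?_⟩
  have hy' : p.lt (e.symm y) (f i) := by
    rwa [lt_iff_lt_of_le_iff (fun _ _ => e.map_rel_iff.symm), RelIso.apply_symm_apply]
  obtain ⟨j, hj⟩ := hflt i _ hy'
  exact ⟨j, by simp [hj]⟩

theorem stemIn_of_qStemIn_mk {b : FinOrd n} {p : PartialOrder α} (h : QStemIn ⟦b⟧ p) :
    StemIn b p := by
  obtain ⟨b', hb', f, hf, hfle, hflt⟩ := h
  obtain ⟨e⟩ : OrdIso b b' := Quotient.exact hb'.symm
  refine ⟨f ∘ e, hf.comp e.injective, fun i j => e.map_rel_iff.symm.trans (hfle _ _),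
    fun i y hy => ?_⟩
  obtain ⟨j, rfl⟩ := hflt (e i) y hy
  exact ⟨e.symm j, by simp⟩

theorem stemIn_comap {p : PartialOrder α} {g : Fin m → α} (hg : Injective g)
    (hlt : ∀ i y, p.lt y (g i) → y ∈ Set.range g) : StemIn (FinOrd.comap p g hg) p :=
  ⟨g, hg, fun _ _ => Iff.rfl, hlt⟩

theorem stemIn_comap_of_range_subset {B : FinOrd n} {p : PartialOrder α} {f : Fin n → α}
    {g : Fin m → α} (hf : Injective f) (hfle : ∀ i j, B.le i j ↔ p.le (f i) (f j))
    (hflt : ∀ i y, p.lt y (f i) → ∃ j, f j = y) (hg : Injective g)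
    (hfg : Set.range f ⊆ Set.range g) : StemIn B (FinOrd.comap p g hg) := by
  choose h hh using fun i => hfg ⟨i, rfl⟩
  refine ⟨h, fun i j hij => hf (by rw [← hh, ← hh, hij]), fun i j => ?_, fun i y hy => ?_⟩
  · rw [hfle, ← hh, ← hh]; rfl
  · obtain ⟨j, hj⟩ := hflt i (g y) (by rw [← hh i]; exact hy)
    exact ⟨j, hg (by rw [hh, hj])⟩

theorem StemIn.card_le {B : FinOrd n} {t : FinOrd m} (h : StemIn B t) : n ≤ m :=
  let ⟨f, hf, _⟩ := h; Fin.le_of_injective f hf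

end Stems

instance (n : ℕ) : Finite (FinOrd n) :=
  Finite.of_injective (fun p => p.le) fun _ _ h =>
    PartialOrder.ext fun a b => iff_of_eq (congrFun (congrFun h a) b)

instance (n : ℕ) : Finite (NOrder n) :=
  Quotient.finite _

section NatCauset

variable {c : NatCauset} {s : ℕ}

theorem nstems_mk (n : ℕ) (c : NatCauset) : Nstems n ⟦c⟧ = stems n c.val := by
  ext B
  constructor
  · rintro ⟨c', hc', b, hb, h⟩
    obtain ⟨e⟩ := Quotient.exact hc'
    exact ⟨b, hb, h.of_relIso e⟩
  · rintro ⟨b, hb, h⟩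
    exact ⟨c, rfl, b, hb, h⟩

theorem stemIn_comap_val (c : NatCauset) (n : ℕ) :
    StemIn (FinOrd.comap c.val (Fin.val : Fin n → ℕ) Fin.val_injective) c.val :=
  stemIn_comap _ fun i y hy => ⟨⟨y, (c.2 y i hy).trans i.isLt⟩, rfl⟩

structure IsNatStemEmbedding (c : NatCauset) (f : Fin s → ℕ) : Prop where
  injective : Injective f
  lt_of_lt : ∀ i j, c.val.lt (f i) (f j) → i < j
  mem_range_of_lt : ∀ i y, c.val.lt y (f i) → y ∈ Set.range f

theorem IsNatStemEmbedding.snoc {f : Fin s → ℕ} (hf : IsNatStemEmbedding c f) {x : ℕ}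
    (hx : x ∉ Set.range f) (hxlt : ∀ y, c.val.lt y x → y ∈ Set.range f) :
    IsNatStemEmbedding c (Fin.snoc f x) := by
  have hrange : Set.range f ⊆ Set.range (Fin.snoc f x : Fin (s + 1) → ℕ) := by
    rw [Fin.range_snoc]; exact Set.subset_insert _ _
  refine ⟨?_, fun i j hij => ?_, fun i y hy => ?_⟩
  · intro i j hij
    induction i using Fin.lastCases <;> induction j using Fin.lastCases <;>
      simp only [Fin.snoc_castSucc, Fin.snoc_last] at hij
    · rfl
    · exact absurd ⟨_, hij.symm⟩ hx
    · exact absurd ⟨_, hij⟩ hx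
    · rw [hf.injective hij]
  · induction i using Fin.lastCases <;> induction j using Fin.lastCases <;>
      simp only [Fin.snoc_castSucc, Fin.snoc_last] at hij
    · exact absurd hij (@lt_irrefl _ c.val.toPreorder x)
    · exact absurd (hf.mem_range_of_lt _ _ hij) hx
    · exact Fin.castSucc_lt_last _
    · exact Fin.castSucc_lt_castSucc_iff.2 (hf.lt_of_lt _ _ hij)
  · induction i using Fin.lastCases <;> simp only [Fin.snoc_castSucc, Fin.snoc_last] at hy
    · exact hrange (hxlt y hy)
    · exact hrange (hf.mem_range_of_lt _ _ hy)

/-- The points of `G` are added one at a time, always the `ℕ`-least missing one. -/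
theorem IsNatStemEmbedding.exists_extend {G : Finset ℕ}
    (hG : ∀ x ∈ G, ∀ y, c.val.lt y x → y ∈ G) {f : Fin s → ℕ}
    (hf : IsNatStemEmbedding c f) :
    ∃ (s' : ℕ) (h : s ≤ s') (f' : Fin s' → ℕ), IsNatStemEmbedding c f' ∧
      f' ∘ Fin.castLE h = f ∧ ↑G ⊆ Set.range f' ∧ s' ≤ s + G.card := by
  suffices key : ∀ (m s : ℕ) (f : Fin s → ℕ), IsNatStemEmbedding c f →
      ((↑G : Set ℕ) \ Set.range f).ncard = m →
      ∃ (s' : ℕ) (h : s ≤ s') (f' : Fin s' → ℕ), IsNatStemEmbedding c f' ∧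
        f' ∘ Fin.castLE h = f ∧ ↑G ⊆ Set.range f' ∧ s' = s + m by
    obtain ⟨s', h, f', hf', hres, hG', rfl⟩ := key _ s f hf rfl
    refine ⟨_, h, f', hf', hres, hG', ?_⟩
    grw [Set.ncard_le_ncard Set.sdiff_subset G.finite_toSet, Set.ncard_coe_finset]
  intro m
  induction m with
  | zero =>
    intro s f hf hm
    refine ⟨s, le_rfl, f, hf, rfl, ?_, rfl⟩
    rwa [Set.ncard_eq_zero G.finite_toSet.sdiff, Set.sdiff_eq_empty] at hm
  | succ m ih =>
    intro s f hf hm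
    set D := (↑G : Set ℕ) \ Set.range f
    have hD : D.Nonempty := Set.nonempty_of_ncard_ne_zero (by omega)
    have hx : sInf D ∈ D := Nat.sInf_mem hD
    have hxlt : ∀ y, c.val.lt y (sInf D) → y ∈ Set.range f := fun y hy => by
      by_contra hyf
      exact absurd (Nat.sInf_le (show y ∈ D from ⟨hG _ hx.1 y hy, hyf⟩))
        (not_le.2 (c.2 y _ hy))
    have hm' :
        ((↑G : Set ℕ) \ Set.range (Fin.snoc f (sInf D) : Fin (s + 1) → ℕ)).ncard = m := by
      rw [Fin.range_snoc, Set.insert_eq, Set.union_comm, ← Set.sdiff_sdiff,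
        Set.ncard_sdiff_singleton_of_mem hx, hm, Nat.add_sub_cancel]
    obtain ⟨s', h, f', hf', hres, hG', rfl⟩ := ih _ _ (hf.snoc hx.2 hxlt) hm'
    refine ⟨_, by omega, f', hf', funext fun i => ?_, hG', by omega⟩
    rw [← Fin.snoc_castSucc (α := fun _ => ℕ) (p := f) (x := sInf D) i, ← hres]
    rfl

end NatCauset

def FinOrd.IsNatural {s : ℕ} (Q : FinOrd s) : Prop :=
  ∀ i j, Q.lt i j → i < j

/-- `Δ` lists the nodes of an infinite path of covtree. -/
def FinitelyCertified (Δ : (n : ℕ) → Set (NOrder n)) : Prop :=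
  ∀ N, ∃ c : NatCauset, ∀ k ≤ N, stems k c.val = Δ k

structure NatApprox (Δ : (n : ℕ) → Set (NOrder n)) where
  size : ℕ
  ord : FinOrd size
  isNatural : ord.IsNatural
  mem : ⟦ord⟧ ∈ Δ size

namespace FinitelyCertified

variable {Δ : (n : ℕ) → Set (NOrder n)}

theorem nonempty (H : FinitelyCertified Δ) (n : ℕ) : (Δ n).Nonempty := by
  obtain ⟨c, hc⟩ := H n
  rw [← hc n le_rfl]
  exact ⟨_, _, rfl, stemIn_comap_val c n⟩

theorem stems_subset (H : FinitelyCertified Δ) {s : ℕ} {Q : FinOrd s} (hQ : ⟦Q⟧ ∈ Δ s)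
    (n : ℕ) : stems n Q ⊆ Δ n := by
  rintro B ⟨b, rfl, hb⟩
  obtain ⟨c, hc⟩ := H (s + n)
  rw [← hc s (by omega)] at hQ
  rw [← hc n (by omega)]
  exact ⟨b, rfl, hb.trans (stemIn_of_qStemIn_mk hQ)⟩

/-- The new points are those of a stem of `A` in a certificate containing `a` as a stem. -/
theorem exists_extend (H : FinitelyCertified Δ) (a : NatApprox Δ) {n : ℕ} {A : NOrder n}
    (hA : A ∈ Δ n) :
    ∃ (b : NatApprox Δ) (h : a.size ≤ b.size),
      (∀ i j, b.ord.le (Fin.castLE h i) (Fin.castLE h j) ↔ a.ord.le i j) ∧ QStemIn A b.ord := by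
  obtain ⟨c, hc⟩ := H (a.size + n)
  have ha := a.mem
  rw [← hc _ (by omega)] at ha hA
  obtain ⟨f, hf, hfle, hflt⟩ := stemIn_of_qStemIn_mk ha
  have hfnat : IsNatStemEmbedding c f :=
    ⟨hf, fun i j h => a.isNatural i j ((lt_iff_lt_of_le_iff hfle i j).2 h), hflt⟩
  obtain ⟨a', ha', g, hg, hgle, hglt⟩ := hA
  obtain ⟨s', h, f', hf', hres, hG, hs'⟩ := hfnat.exists_extend (G := Finset.univ.image g)
    (by
      simp only [Finset.mem_image, Finset.mem_univ, true_and]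
      rintro _ ⟨i, rfl⟩ y hy
      exact hglt i y hy)
  have hcard : (Finset.univ.image g).card ≤ n := Finset.card_image_le.trans (by simp)
  refine ⟨⟨s', FinOrd.comap c.val f' hf'.injective, hf'.lt_of_lt, ?_⟩, h, fun i j => ?_, ?_⟩
  · rw [← hc s' (by omega)]
    exact ⟨_, rfl, stemIn_comap _ hf'.mem_range_of_lt⟩
  · change c.val.le ((f' ∘ Fin.castLE h) i) ((f' ∘ Fin.castLE h) j) ↔ _
    rw [hres, hfle]
  · refine ⟨a', ha', stemIn_comap_of_range_subset hg hgle hglt hf'.injective ?_⟩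
    exact subset_trans (by simp) hG

end FinitelyCertified

structure NatTower where
  size : ℕ → ℕ
  ord : (k : ℕ) → FinOrd (size k)
  size_le_succ : ∀ k, size k ≤ size (k + 1)
  le_castLE_iff : ∀ k i j, (ord (k + 1)).le (Fin.castLE (size_le_succ k) i)
    (Fin.castLE (size_le_succ k) j) ↔ (ord k).le i j
  isNatural : ∀ k, (ord k).IsNatural
  unbounded : ∀ M, ∃ k, M < size k

namespace NatTower

variable (T : NatTower)

theorem size_mono : Monotone T.size :=
  monotone_nat_of_le_succ T.size_le_succ

theorem ord_le_iff_of_le {k k' : ℕ} (hk : k ≤ k') {i j : ℕ} (hi : i < T.size k)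
    (hj : j < T.size k) :
    (T.ord k').le ⟨i, hi.trans_le (T.size_mono hk)⟩ ⟨j, hj.trans_le (T.size_mono hk)⟩ ↔
      (T.ord k).le ⟨i, hi⟩ ⟨j, hj⟩ := by
  induction k', hk using Nat.le_induction with
  | base => rfl
  | succ k' hk ih => exact (T.le_castLE_iff k' ⟨i, _⟩ ⟨j, _⟩).trans ih

theorem ord_le_congr {k k' i j : ℕ} (hi : i < T.size k) (hj : j < T.size k)
    (hi' : i < T.size k') (hj' : j < T.size k') :
    (T.ord k).le ⟨i, hi⟩ ⟨j, hj⟩ ↔ (T.ord k').le ⟨i, hi'⟩ ⟨j, hj'⟩ := by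
  rcases le_total k k' with h | h
  · exact (T.ord_le_iff_of_le h hi hj).symm
  · exact T.ord_le_iff_of_le h hi' hj'

abbrev limitOrd : PartialOrder ℕ where
  le i j := ∃ k, ∃ (hi : i < T.size k) (hj : j < T.size k), (T.ord k).le ⟨i, hi⟩ ⟨j, hj⟩
  lt i j :=
    (∃ k, ∃ (hi : i < T.size k) (hj : j < T.size k), (T.ord k).le ⟨i, hi⟩ ⟨j, hj⟩) ∧
      ¬∃ k, ∃ (hj : j < T.size k) (hi : i < T.size k), (T.ord k).le ⟨j, hj⟩ ⟨i, hi⟩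
  lt_iff_le_not_ge _ _ := Iff.rfl
  le_refl i :=
    let ⟨k, hk⟩ := T.unbounded i
    ⟨k, hk, hk, (T.ord k).le_refl _⟩
  le_trans i j l := by
    rintro ⟨k₁, hi, hj, hij⟩ ⟨k₂, hj', hl, hjl⟩
    obtain ⟨k, hk⟩ := T.unbounded (max i (max j l))
    refine ⟨k, by omega, by omega, (T.ord k).le_trans _ ⟨j, by omega⟩ _ ?_ ?_⟩
    · exact (T.ord_le_congr ..).1 hij
    · exact (T.ord_le_congr ..).1 hjl
  le_antisymm i j := by
    rintro ⟨k, hi, hj, hij⟩ ⟨k', hj', hi', hji⟩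
    exact congrArg Fin.val ((T.ord k).le_antisymm _ _ hij ((T.ord_le_congr ..).2 hji))

theorem limitOrd_le_iff {k i j : ℕ} (hi : i < T.size k) (hj : j < T.size k) :
    T.limitOrd.le i j ↔ (T.ord k).le ⟨i, hi⟩ ⟨j, hj⟩ :=
  ⟨fun ⟨_, _, _, h⟩ => (T.ord_le_congr ..).1 h, fun h => ⟨k, hi, hj, h⟩⟩

theorem ord_eq_comap (k : ℕ) :
    T.ord k = FinOrd.comap T.limitOrd Fin.val Fin.val_injective :=
  PartialOrder.ext fun i j => (T.limitOrd_le_iff i.isLt j.isLt).symm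

def limit : NatCauset :=
  ⟨T.limitOrd, fun i j hij => by
    obtain ⟨k, hk⟩ := T.unbounded (max i j)
    have hlt := (lt_iff_lt_of_le_iff (p := T.ord k) (q := T.limitOrd) (f := Fin.val)
      (fun a b => (T.limitOrd_le_iff a.isLt b.isLt).symm)
      ⟨i, (le_max_left i j).trans_lt hk⟩ ⟨j, (le_max_right i j).trans_lt hk⟩).2 hij
    exact T.isNatural k _ _ hlt⟩

theorem stems_limit (n : ℕ) : stems n T.limit.val = ⋃ k, stems n (T.ord k) := by
  ext B
  constructor
  · rintro ⟨b, rfl, f, hf, hfle, hflt⟩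
    obtain ⟨k, hk⟩ := T.unbounded (Finset.univ.sup f)
    have hfk : Set.range f ⊆ Set.range (Fin.val : Fin (T.size k) → ℕ) := by
      rintro _ ⟨i, rfl⟩
      exact ⟨⟨f i, (Finset.le_sup (Finset.mem_univ i)).trans_lt hk⟩, rfl⟩
    refine Set.mem_iUnion.2 ⟨k, b, rfl, ?_⟩
    rw [T.ord_eq_comap]
    exact stemIn_comap_of_range_subset (p := T.limitOrd) hf hfle hflt _ hfk
  · rintro hB
    obtain ⟨k, b, rfl, hb⟩ := Set.mem_iUnion.1 hB
    refine ⟨b, rfl, hb.trans ?_⟩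
    rw [T.ord_eq_comap]
    exact stemIn_comap_val T.limit (T.size k)

end NatTower

theorem FinitelyCertified.exists_natCauset {Δ : (n : ℕ) → Set (NOrder n)}
    (H : FinitelyCertified Δ) : ∃ d : NatCauset, ∀ n, stems n d.val = Δ n := by
  obtain ⟨A₀, hA₀⟩ := H.nonempty 0
  obtain ⟨b₀, rfl⟩ := Quotient.exists_rep A₀
  have : Nonempty (Σ n, NOrder n) := ⟨⟨0, ⟦b₀⟧⟩⟩
  obtain ⟨e, he⟩ := exists_surjective_nat (Σ n, NOrder n)
  have step : ∀ (a : NatApprox Δ) (k : ℕ), ∃ (b : NatApprox Δ) (h : a.size ≤ b.size),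
      (∀ i j, b.ord.le (Fin.castLE h i) (Fin.castLE h j) ↔ a.ord.le i j) ∧
        ((e k).2 ∈ Δ (e k).1 → QStemIn (e k).2 b.ord) := by
    intro a k
    by_cases hk : (e k).2 ∈ Δ (e k).1
    · obtain ⟨b, h, hb, hA⟩ := H.exists_extend a hk
      exact ⟨b, h, hb, fun _ => hA⟩
    · exact ⟨a, le_rfl, fun _ _ => Iff.rfl, fun h => absurd h hk⟩
  choose next hsize hnext hreq using step
  let a : ℕ → NatApprox Δ := fun k =>
    Nat.rec ⟨0, b₀, fun i => i.elim0, hA₀⟩ (fun k a => next a k) k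
  have hstem : ∀ n, ∀ A ∈ Δ n, ∃ k, QStemIn A (a k).ord := fun n A hA => by
    obtain ⟨k, hk⟩ := he ⟨n, A⟩
    have := hreq (a k) k
    rw [hk] at this
    exact ⟨k + 1, this hA⟩
  let T : NatTower :=
    { size k := (a k).size
      ord k := (a k).ord
      size_le_succ k := hsize (a k) k
      le_castLE_iff k := hnext (a k) k
      isNatural k := (a k).isNatural
      unbounded M := by
        obtain ⟨A, hA⟩ := H.nonempty (M + 1)
        obtain ⟨k, b, -, hb⟩ := hstem _ A hA
        exact ⟨k, hb.card_le⟩ }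
  refine ⟨T.limit, fun n => ?_⟩
  rw [T.stems_limit]
  exact subset_antisymm (Set.iUnion_subset fun k => H.stems_subset (a k).mem n)
    fun A hA => Set.mem_iUnion.2 (hstem n A hA)

theorem Ultrafilter.exists_eventually_eq {α β : Type*} [Finite β] (U : Ultrafilter α)
    (f : α → β) : ∃ b, ∀ᶠ a in U, f a = b := by
  obtain ⟨b, hb⟩ := (U.map f).eq_pure_of_finite
  exact ⟨b, Ultrafilter.mem_map.1 (hb ▸ rfl : {b} ∈ U.map f)⟩

theorem finitelyCertified_of_eventually {ι : Type*} {l : Filter ι} [l.NeBot] {C : ι → InfOrd}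
    {Δ : (n : ℕ) → Set (NOrder n)} (h : ∀ n, ∀ᶠ i in l, Nstems n (C i) = Δ n) :
    FinitelyCertified Δ := fun N => by
  obtain ⟨i, hi⟩ := ((eventually_all_finite (Set.finite_Iic N)).2 fun k _ => h k).exists
  obtain ⟨c, hc⟩ := Quotient.exists_rep (C i)
  exact ⟨c, fun k hk => by rw [← nstems_mk, hc]; exact hi k hk⟩

theorem no_countable_disjoint_decomposition_general {m : ℕ} (Γm : Set (NOrder m))
    (lvl : ℕ → ℕ) (Γ : (i : ℕ) → Set (NOrder (lvl i)))
    (hcover : certSet Γm = ⋃ i : ℕ, certSet (Γ i))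
    (hdisj : Pairwise fun i j => Disjoint (certSet (Γ i)) (certSet (Γ j))) :
    {i : ℕ | (certSet (Γ i)).Nonempty}.Finite := by
  by_contra hS
  let S := {i : ℕ | (certSet (Γ i)).Nonempty}
  have : Infinite S := Set.infinite_coe_iff.2 hS
  let C : S → InfOrd := fun i => i.2.some
  have hC : ∀ i : S, C i ∈ certSet (Γ i) := fun i => i.2.some_mem
  let U := hyperfilter S
  choose Δ hΔ using fun n => U.exists_eventually_eq fun i => Nstems n (C i)
  obtain ⟨d, hd⟩ := (finitelyCertified_of_eventually hΔ).exists_natCauset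
  have hdm : ⟦d⟧ ∈ certSet Γm := by
    obtain ⟨i, hi⟩ := (hΔ m).exists
    have hCi : C i ∈ certSet Γm := hcover ▸ Set.mem_iUnion_of_mem i.1 (hC i)
    change Nstems m ⟦d⟧ = Γm
    rw [nstems_mk, hd, ← hi]
    exact hCi
  rw [hcover] at hdm
  obtain ⟨i₀, hi₀⟩ := Set.mem_iUnion.1 hdm
  have hne : ∀ᶠ i : S in U, i.1 ≠ i₀ := compl_mem_hyperfilter_of_finite
    ((Set.finite_singleton i₀).preimage Subtype.val_injective.injOn)
  obtain ⟨i, hi, hii₀⟩ := ((hΔ (lvl i₀)).and hne).exists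
  have hCi : C i ∈ certSet (Γ i₀) := by
    change Nstems _ (C i) = Γ i₀
    rw [hi, ← hd, ← nstems_mk]
    exact hi₀
  exact Set.disjoint_left.1 (hdisj hii₀) (hC i) hCi

/-- No certificate set in covtree is a countably infinite
disjoint union of certificate sets: if `cert(Γₘ)` is the disjoint union of a
countable family of certificate sets of covtree nodes, then only finitely many
members of the family are nonempty, i.e. the union is in fact finite. -/
theorem no_countable_disjoint_decomposition {m : ℕ} (Γm : Set (NOrder m))
    (hΓm : IsNode m Γm)
    (lvl : ℕ → ℕ) (Γ : (i : ℕ) → Set (NOrder (lvl i)))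
    (hΓ : ∀ i, IsNode (lvl i) (Γ i))
    (hcover : certSet Γm = ⋃ i : ℕ, certSet (Γ i))
    (hdisj : Pairwise fun i j => Disjoint (certSet (Γ i)) (certSet (Γ j))) :
    {i : ℕ | (certSet (Γ i)).Nonempty}.Finite :=
  no_countable_disjoint_decomposition_general Γm lvl Γ hcover hdisj
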